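/- For every k ≥ 1, if a graph G has neither K_{k+2} nor K_{k+3}^{-3} (the complete graph on k+3 vertices with the three edges of one triangle removed) as a minor, then G admits a closed-neighborhood conflict-free k-coloring. -/

import Mathlib

/-!
Induction on `k`. For `k = 1` the excluded minors `K₃` and `K₄⁻³ = K₁,₃` make `G` a disjoint
union of paths, and paths have perfect codes: remove the closed neighbourhood of the
neighbour `x` of a leaf `r`, and add `x` (or `r`, if the rest of the code already reaches
`N[x]`).

For the step, work in a component and take a maximal set `D` of vertices with pairwise disjoint
closed neighbourhoods whose union `X` is connected. Maximality forces every vertex outside `X`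
to have a neighbour in `X`, so contracting `X` to an apex shows that `G - X` has neither a
`K_{k+1}` nor a `K_{k+2}⁻³` minor. Colour `G - X` with `k - 1` colours by induction and give
all of `D` the new colour: every vertex of `X` sees exactly one vertex of `D`, and no vertex
outside `X` sees any.
-/

open SimpleGraph

def closedNbhd {V : Type*} (G : SimpleGraph V) (v : V) : Set V := insert v (G.neighborSet v)

def IsCFColoring {V : Type*} (G : SimpleGraph V) (k : ℕ) (c : V → Option (Fin k)) : Prop :=
  ∀ v : V, ∃ w ∈ closedNbhd G v, ∃ col : Fin k, c w = some col ∧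
    ∀ u ∈ closedNbhd G v, c u = some col → u = w

def HasMinor {V W : Type*} (G : SimpleGraph V) (H : SimpleGraph W) : Prop :=
  ∃ f : W → Set V,
    (∀ w, (f w).Nonempty) ∧
    (∀ w, (G.induce (f w)).Connected) ∧
    (Pairwise fun w w' => Disjoint (f w) (f w')) ∧
    ∀ ⦃w w'⦄, H.Adj w w' → ∃ a ∈ f w, ∃ b ∈ f w', G.Adj a b

/-- `K_n^{-3}`: the complete graph on `Fin n` with the three edges of the triangle on the
first three vertices removed. -/
def completeMinusTriangle (n : ℕ) : SimpleGraph (Fin n) where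
  Adj i j := i ≠ j ∧ ¬(i.val < 3 ∧ j.val < 3)
  symm := by constructor; intro i j ⟨h1, h2⟩; exact ⟨h1.symm, fun ⟨a, b⟩ => h2 ⟨b, a⟩⟩
  loopless := by constructor; intro i ⟨h1, _⟩; exact h1 rfl

section

variable {V W V' : Type*} {G : SimpleGraph V} {G' : SimpleGraph V'}

@[simp]
lemma mem_closedNbhd {u v : V} : u ∈ closedNbhd G v ↔ u = v ∨ G.Adj v u := Iff.rfl

lemma mem_closedNbhd_comm {u v : V} : u ∈ closedNbhd G v ↔ v ∈ closedNbhd G u := by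
  simp only [mem_closedNbhd, eq_comm, G.adj_comm]

lemma self_mem_closedNbhd (v : V) : v ∈ closedNbhd G v := Set.mem_insert v _

@[simp]
lemma mem_closedNbhd_induce {s : Set V} {u v : s} :
    u ∈ closedNbhd (G.induce s) v ↔ (u : V) ∈ closedNbhd G v := by
  simp [Subtype.ext_iff]

lemma connected_induce_closedNbhd (v : V) : (G.induce (closedNbhd G v)).Connected := by
  refine induce_connected_of_patches v (self_mem_closedNbhd v) fun {u} hu => ?_
  rcases mem_closedNbhd.1 hu with rfl | hu
  · exact ⟨{u}, by simp, rfl, rfl, .rfl⟩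
  · refine ⟨{v, u}, ?_, by simp, by simp, (induce_pair_connected_of_adj hu).preconnected _ _⟩
    simp [Set.insert_subset_iff, hu]

lemma SimpleGraph.Connected.induce_image (f : G →g G') {s : Set V} (h : (G.induce s).Connected) :
    (G'.induce (f '' s)).Connected := by
  let φ : G.induce s →g G'.induce (f '' s) :=
    ⟨fun v => ⟨f v, Set.mem_image_of_mem f v.2⟩, fun hadj => f.map_rel hadj⟩
  refine h.map φ ?_
  rintro ⟨_, v, hv, rfl⟩
  exact ⟨⟨v, hv⟩, rfl⟩

lemma HasMinor.refl (H : SimpleGraph W) : HasMinor H H := by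
  refine ⟨fun w => {w}, fun w => Set.singleton_nonempty w, fun w => ?_, ?_, ?_⟩
  · rw [induce_singleton_eq_top]
    exact connected_top
  · exact fun w w' h => Set.disjoint_singleton.2 h
  · exact fun w w' h => ⟨w, rfl, w', rfl, h⟩

lemma HasMinor.map {H : SimpleGraph W} (f : G.Copy G') (h : HasMinor G H) : HasMinor G' H := by
  obtain ⟨B, hne, hconn, hdisj, hadj⟩ := h
  refine ⟨fun w => f '' B w, fun w => (hne w).image f, fun w => (hconn w).induce_image f.toHom,
    fun w w' h => (Set.disjoint_image_iff f.injective).2 (hdisj h), fun w w' h => ?_⟩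
  obtain ⟨a, ha, b, hb, hab⟩ := hadj h
  exact ⟨f a, Set.mem_image_of_mem f ha, f b, Set.mem_image_of_mem f hb, f.toHom.map_rel hab⟩

lemma HasMinor.of_copy {H : SimpleGraph W} (f : H.Copy G) : HasMinor G H :=
  (HasMinor.refl H).map f

lemma completeMinusTriangle_comap_castSucc (m : ℕ) :
    (completeMinusTriangle (m + 1)).comap Fin.castSucc = completeMinusTriangle m := by
  ext i j
  simp [completeMinusTriangle, Fin.castSucc_inj]

lemma HasMinor.extend_apex {m : ℕ} {H : SimpleGraph (Fin m)} {H' : SimpleGraph (Fin (m + 1))}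
    (hH : H'.comap Fin.castSucc ≤ H) {s X : Set V} (hX : (G.induce X).Connected)
    (hsX : Disjoint s X) (hdom : ∀ v ∈ s, ∃ x ∈ X, G.Adj v x) (h : HasMinor (G.induce s) H) :
    HasMinor G H' := by
  obtain ⟨B, hne, hconn, hdisj, hadj⟩ := h
  have hBs (i : Fin m) : (↑) '' B i ⊆ s := by rintro _ ⟨v, -, rfl⟩; exact v.2
  have hdomB (i : Fin m) : ∃ a ∈ (↑) '' B i, ∃ x ∈ X, G.Adj a x := by
    obtain ⟨v, hv⟩ := hne i
    exact ⟨v, Set.mem_image_of_mem _ hv, hdom v v.2⟩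
  refine ⟨Fin.lastCases X fun i => (↑) '' B i, fun w => ?_, fun w => ?_, fun w w' hww' => ?_,
    fun w w' hww' => ?_⟩
  · induction w using Fin.lastCases with
    | last => simpa using Set.nonempty_coe_sort.1 hX.nonempty
    | cast i => simpa using (hne i).image Subtype.val
  · induction w using Fin.lastCases with
    | last => beta_reduce; rw [Fin.lastCases_last]; exact hX
    | cast i =>
      beta_reduce; rw [Fin.lastCases_castSucc]
      exact (hconn i).induce_image (Embedding.induce s).toHom
  · induction w using Fin.lastCases with
    | last =>
      induction w' using Fin.lastCases with
      | last => exact absurd rfl hww'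
      | cast j => simpa using (hsX.mono_left (hBs j)).symm
    | cast i =>
      induction w' using Fin.lastCases with
      | last => simpa using hsX.mono_left (hBs i)
      | cast j =>
        simpa using (Set.disjoint_image_iff Subtype.val_injective).2
          (hdisj fun h => hww' (congrArg _ h))
  · induction w using Fin.lastCases with
    | last =>
      induction w' using Fin.lastCases with
      | last => exact absurd hww' (H'.loopless.irrefl _)
      | cast j =>
        obtain ⟨a, ha, x, hx, hax⟩ := hdomB j
        exact ⟨x, by simpa using hx, a, by simpa using ha, hax.symm⟩
    | cast i =>
      induction w' using Fin.lastCases with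
      | last =>
        obtain ⟨a, ha, x, hx, hax⟩ := hdomB i
        exact ⟨a, by simpa using ha, x, by simpa using hx, hax⟩
      | cast j =>
        obtain ⟨a, ha, b, hb, hab⟩ := hadj (hH hww')
        exact ⟨a, by simpa using ha, b, by simpa using hb, hab⟩

lemma hasMinor_top_three {u v : V} (huv : G.Adj u v) {S : Set V} (hS : (G.induce S).Connected)
    (hu : u ∉ S) (hv : v ∉ S) (huS : ∃ a ∈ S, G.Adj u a) (hvS : ∃ b ∈ S, G.Adj v b) :
    HasMinor G (⊤ : SimpleGraph (Fin 3)) := by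
  have hne : u ≠ v := huv.ne
  refine ⟨![{u}, {v}, S], fun i => ?_, fun i => ?_, fun i j hij => ?_, fun i j hij => ?_⟩
  · fin_cases i
    exacts [Set.singleton_nonempty u, Set.singleton_nonempty v,
      Set.nonempty_coe_sort.1 hS.nonempty]
  · fin_cases i
    · simp
    · simp
    · exact hS
  · fin_cases i <;> fin_cases j <;> simp_all [eq_comm]
  · fin_cases i <;> fin_cases j <;> simp_all [G.adj_comm]

lemma isAcyclic_of_not_hasMinor_top_three (h : ¬ HasMinor G (⊤ : SimpleGraph (Fin 3))) :
    G.IsAcyclic := by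
  intro v c hc
  cases c with
  | nil => exact absurd hc Walk.not_isCycle_nil
  | @cons _ w _ hvw p =>
  obtain ⟨hp, hvwp⟩ := Walk.cons_isCycle_iff p hvw |>.1 hc
  obtain ⟨w', hww', p', rfl⟩ := p.exists_eq_cons_of_ne hvw.ne'
  have hw'v : v ≠ w' := by
    rintro rfl
    exact hvwp (by simp [Sym2.eq_swap])
  obtain ⟨t, hvt, q, hq⟩ := p'.reverse.exists_eq_cons_of_ne hw'v
  have hwp' : w ∉ p'.support := (Walk.cons_isPath_iff _ _).1 hp |>.2
  have hvq : v ∉ q.support := by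
    have := hp.of_cons.reverse
    rw [hq, Walk.cons_isPath_iff] at this
    exact this.2
  have hqp' : ∀ x ∈ q.support, x ∈ p'.support := fun x hx => by
    have : x ∈ p'.reverse.support := by rw [hq]; exact List.mem_cons_of_mem _ hx
    simpa using this
  exact h <| hasMinor_top_three hvw q.connected_induce_support hvq (fun h => hwp' (hqp' w h))
    ⟨t, q.start_mem_support, hvt⟩ ⟨w', q.end_mem_support, hww'⟩

lemma SimpleGraph.IsAcyclic.exists_subsingleton_neighborSet [Finite V] [Nonempty V]
    (hG : G.IsAcyclic) : ∃ v, (G.neighborSet v).Subsingleton := by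
  classical
  have := Fintype.ofFinite V
  have : Nonempty (Σ u v, G.Path u v) := ⟨⟨Classical.arbitrary V, _, Path.nil⟩⟩
  obtain ⟨⟨u, v, p⟩, hp⟩ := Finite.exists_max fun p : Σ u v, G.Path u v => p.2.2.1.length
  refine ⟨u, fun a ha b hb => ?_⟩
  have hsupp {w : V} (hw : G.Adj u w) : w ∈ p.1.support := by
    by_contra hwp
    have := hp ⟨w, v, ⟨Walk.cons hw.symm p.1, p.2.cons hwp⟩⟩
    simp at this
  rw [hG.eq_snd_of_adj_start p.2 ha (hsupp ha), hG.eq_snd_of_adj_start p.2 hb (hsupp hb)]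

lemma hasMinor_completeMinusTriangle_four {v a b c : V} (ha : G.Adj v a) (hb : G.Adj v b)
    (hc : G.Adj v c) (hab : a ≠ b) (hac : a ≠ c) (hbc : b ≠ c) :
    HasMinor G (completeMinusTriangle 4) := by
  refine .of_copy ⟨⟨![a, b, c, v], fun {i j} hij => ?_⟩, fun i j hij => ?_⟩
  · obtain ⟨hij, hlt⟩ := hij
    fin_cases i <;> fin_cases j <;> simp_all [G.adj_comm]
  · have := ha.ne; have := hb.ne; have := hc.ne
    fin_cases i <;> fin_cases j <;> simp_all [eq_comm]

lemma eq_of_adj_of_not_hasMinor_completeMinusTriangle_four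
    (h : ¬ HasMinor G (completeMinusTriangle 4)) {v a b c : V} (ha : G.Adj v a) (hb : G.Adj v b)
    (hc : G.Adj v c) (hab : a ≠ b) (hac : a ≠ c) : b = c := by
  by_contra hbc
  exact h (hasMinor_completeMinusTriangle_four ha hb hc hab hac hbc)

def IsPerfectCode (G : SimpleGraph V) (D : Set V) : Prop :=
  ∀ v, ∃! d, d ∈ D ∧ d ∈ closedNbhd G v

lemma IsPerfectCode.exists_isCFColoring {D : Set V} (hD : IsPerfectCode G D) :
    ∃ c : V → Option (Fin 1), IsCFColoring G 1 c := by
  classical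
  refine ⟨fun v => if v ∈ D then some 0 else none, fun v => ?_⟩
  obtain ⟨d, ⟨hdD, hdv⟩, huniq⟩ := hD v
  refine ⟨d, hdv, 0, by simp [hdD], fun u hu hcu => huniq u ⟨?_, hu⟩⟩
  by_contra huD
  simp [huD] at hcu

lemma IsPerfectCode.insert_image_val {S : Set V} {D : Set ↥Sᶜ}
    (hD : IsPerfectCode (G.induce Sᶜ) D) {p : V} (hp : closedNbhd G p ⊆ S)
    (hS : ∀ v ∈ S, ∃! d, d ∈ insert p ((↑) '' D) ∧ d ∈ closedNbhd G v) :
    IsPerfectCode G (insert p ((↑) '' D)) := by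
  intro v
  by_cases hv : v ∈ S
  · exact hS v hv
  obtain ⟨d, ⟨hdD, hdv⟩, huniq⟩ := hD ⟨v, hv⟩
  have hpv : p ∉ closedNbhd G v := fun h => hv (hp (mem_closedNbhd_comm.1 h))
  refine ⟨d, ⟨Set.mem_insert_of_mem _ ⟨d, hdD, rfl⟩, mem_closedNbhd_induce.1 hdv⟩, ?_⟩
  rintro _ ⟨rfl | ⟨e, heD, rfl⟩, hev⟩
  · exact absurd hev hpv
  · exact congrArg _ (huniq e ⟨heD, mem_closedNbhd_induce.2 hev⟩)

lemma IsPerfectCode.insert_of_forall_not_adj {x : V} {D : Set ↥(closedNbhd G x)ᶜ}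
    (hD : IsPerfectCode (G.induce (closedNbhd G x)ᶜ) D)
    (hB : ∀ s ∈ closedNbhd G x, ∀ z ∈ D, ¬ G.Adj s z) :
    IsPerfectCode G (insert x ((↑) '' D)) := by
  refine hD.insert_image_val subset_rfl fun v hv =>
    ⟨x, ⟨Set.mem_insert x _, mem_closedNbhd_comm.1 hv⟩, ?_⟩
  rintro _ ⟨rfl | ⟨e, heD, rfl⟩, he⟩
  · rfl
  · exact absurd ((mem_closedNbhd.1 he).resolve_left fun h => e.2 (h ▸ hv)) (hB v hv e heD)

/-- The vertices `r – x – s – z` form a path with `r` a leaf: `r` covers `r` and `x`, and `z`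
covers `s`. -/
lemma IsPerfectCode.insert_leaf (h4 : ¬ HasMinor G (completeMinusTriangle 4)) {r x : V}
    (hxr : x ∈ closedNbhd G r) (hrx : ∀ y, G.Adj r y → y = x) {D : Set ↥(closedNbhd G x)ᶜ}
    (hD : IsPerfectCode (G.induce (closedNbhd G x)ᶜ) D) {s : V} (hsx : s ∈ closedNbhd G x)
    {z : ↥(closedNbhd G x)ᶜ} (hzD : z ∈ D) (hsz : G.Adj s z) :
    IsPerfectCode G (insert r ((↑) '' D)) := by
  have hsx' : s ≠ x := by rintro rfl; exact z.2 (Or.inr hsz)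
  have hxs : G.Adj x s := (mem_closedNbhd.1 hsx).resolve_left hsx'
  have hsr : s ≠ r := by
    rintro rfl
    exact z.2 (by rw [hrx z hsz]; exact self_mem_closedNbhd x)
  have hrx' : G.Adj r x := (mem_closedNbhd.1 hxr).resolve_left fun h => hsx' (hrx s (h ▸ hxs))
  have hNr : closedNbhd G r ⊆ closedNbhd G x := by
    rintro u (rfl | hu)
    · exact mem_closedNbhd_comm.1 hxr
    · rw [hrx u hu]; exact self_mem_closedNbhd x
  refine hD.insert_image_val hNr fun v hv => ?_
  rcases mem_closedNbhd.1 hv with rfl | hxv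
  · refine ⟨r, ⟨Set.mem_insert r _, mem_closedNbhd_comm.1 hxr⟩, ?_⟩
    rintro _ ⟨rfl | ⟨e, -, rfl⟩, he⟩
    exacts [rfl, absurd he e.2]
  by_cases hvr : v = r
  · subst hvr
    refine ⟨v, ⟨Set.mem_insert v _, self_mem_closedNbhd v⟩, ?_⟩
    rintro _ ⟨rfl | ⟨e, -, rfl⟩, he⟩
    exacts [rfl, absurd (hNr he) e.2]
  obtain rfl : v = s := eq_of_adj_of_not_hasMinor_completeMinusTriangle_four h4 hrx'.symm hxv hxs
    (Ne.symm hvr) hsr.symm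
  refine ⟨z, ⟨Set.mem_insert_of_mem _ ⟨z, hzD, rfl⟩, Or.inr hsz⟩, ?_⟩
  rintro _ ⟨rfl | ⟨e, -, rfl⟩, he⟩
  · rcases mem_closedNbhd.1 he with h | h
    exacts [absurd h hsr.symm, absurd (hrx v h.symm) hsx']
  · have hve : G.Adj v e := (mem_closedNbhd.1 he).resolve_left fun h => e.2 (h ▸ hsx)
    exact eq_of_adj_of_not_hasMinor_completeMinusTriangle_four h4 hxs.symm hve hsz
      (fun h => e.2 (h ▸ self_mem_closedNbhd x)) (fun h => z.2 (h ▸ self_mem_closedNbhd x))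

theorem exists_isPerfectCode [Finite V] (h3 : ¬ HasMinor G (⊤ : SimpleGraph (Fin 3)))
    (h4 : ¬ HasMinor G (completeMinusTriangle 4)) : ∃ D, IsPerfectCode G D := by
  induction hn : Nat.card V using Nat.strong_induction_on generalizing V with
  | _ n ih =>
  rcases isEmpty_or_nonempty V with hV | hV
  · exact ⟨∅, isEmptyElim⟩
  obtain ⟨r, hr⟩ := (isAcyclic_of_not_hasMinor_top_three h3).exists_subsingleton_neighborSet
  obtain ⟨x, hxr, hrx⟩ : ∃ x, x ∈ closedNbhd G r ∧ ∀ y, G.Adj r y → y = x := by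
    by_cases h : ∃ a, G.Adj r a
    · obtain ⟨a, ha⟩ := h
      exact ⟨a, Or.inr ha, fun y hy => hr hy ha⟩
    · push Not at h
      exact ⟨r, self_mem_closedNbhd r, fun y hy => absurd hy (h y)⟩
  obtain ⟨D, hD⟩ := ih _ (hn ▸ Finite.card_subtype_lt (not_not.2 (self_mem_closedNbhd x)))
    (G := G.induce (closedNbhd G x)ᶜ) (fun h => h3 (h.map (Copy.induce G _)))
    (fun h => h4 (h.map (Copy.induce G _))) rfl
  by_cases hB : ∃ s ∈ closedNbhd G x, ∃ z ∈ D, G.Adj s z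
  · obtain ⟨s, hsx, z, hzD, hsz⟩ := hB
    exact ⟨_, hD.insert_leaf h4 hxr hrx hsx hzD hsz⟩
  · push Not at hB
    exact ⟨_, hD.insert_of_forall_not_adj hB⟩

lemma exists_isCFColoring_of_forall_connectedComponent {k : ℕ}
    (h : ∀ C : G.ConnectedComponent, ∃ c, IsCFColoring (G.induce C.supp) k c) :
    ∃ c, IsCFColoring G k c := by
  choose c hc using h
  have hcol (C : G.ConnectedComponent) (u : V) (hu : u ∈ C.supp) :
      c (G.connectedComponentMk u) ⟨u, rfl⟩ = c C ⟨u, hu⟩ := by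
    subst hu; rfl
  refine ⟨fun v => c (G.connectedComponentMk v) ⟨v, rfl⟩, fun v => ?_⟩
  set C := G.connectedComponentMk v
  have hsupp {u : V} (hu : u ∈ closedNbhd G v) : u ∈ C.supp := by
    rcases hu with rfl | hu
    exacts [rfl, (C.mem_supp_congr_adj hu).1 rfl]
  obtain ⟨w, hw, col, hwcol, huniq⟩ := hc C ⟨v, rfl⟩
  refine ⟨w, mem_closedNbhd_induce.1 hw, col, (hcol C w w.2).trans hwcol, fun u hu hucol => ?_⟩
  rw [← huniq ⟨u, hsupp hu⟩ (mem_closedNbhd_induce.2 hu) ((hcol C u _).symm.trans hucol)]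

lemma SimpleGraph.Connected.exists_dominating_packing [Finite V] (hG : G.Connected) :
    ∃ D : Set V, D.PairwiseDisjoint (closedNbhd G) ∧
      (G.induce (⋃ d ∈ D, closedNbhd G d)).Connected ∧
      ∀ v ∉ ⋃ d ∈ D, closedNbhd G d, ∃ x ∈ ⋃ d ∈ D, closedNbhd G d, G.Adj v x := by
  obtain ⟨r⟩ := hG.nonempty
  obtain ⟨D, -, hD⟩ := Finite.exists_le_maximal (a := {r}) (p := fun D : Set V =>
      D.PairwiseDisjoint (closedNbhd G) ∧ (G.induce (⋃ d ∈ D, closedNbhd G d)).Connected)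
    ⟨Set.pairwiseDisjoint_singleton _ _,
      by rw [Set.biUnion_singleton]; exact connected_induce_closedNbhd r⟩
  set X := ⋃ d ∈ D, closedNbhd G d
  refine ⟨D, hD.1.1, hD.1.2, ?_⟩
  by_contra! ⟨v, hvX, hv⟩
  set B := {b | b ∉ X ∧ ∀ x ∈ X, ¬ G.Adj b x}
  obtain ⟨⟨x₀, hx₀⟩⟩ := hD.1.2.nonempty
  -- `b` is at distance two from `X`, through `p`; then `insert b D` contradicts maximality.
  obtain ⟨⟨⟨p, b⟩, hpb⟩, -, hp, hb⟩ := (hG.preconnected x₀ v).some.exists_boundary_dart Bᶜ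
    (fun h => h.1 hx₀) (not_not.2 ⟨hvX, hv⟩)
  rw [Set.notMem_compl_iff] at hb
  have hpX : p ∉ X := fun h => hb.2 p h hpb.symm
  obtain ⟨x, hx, hpx⟩ : ∃ x ∈ X, G.Adj p x := by simpa [B, hpX] using hp
  have hbD : b ∉ D := fun h => hb.1 (Set.mem_biUnion h (self_mem_closedNbhd b))
  refine hbD (hD.2 ⟨?_, ?_⟩ (Set.subset_insert b D) (Set.mem_insert b D))
  · refine hD.1.1.insert fun d hd _ => Set.disjoint_left.2 fun y hyb hyd => ?_
    have hyX : y ∈ X := Set.mem_biUnion hd hyd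
    rcases hyb with rfl | hby
    exacts [hb.1 hyX, hb.2 y hyX hby]
  · rw [Set.biUnion_insert]
    exact connected_induce_union (connected_induce_closedNbhd b).preconnected
      hD.1.2.preconnected (Or.inr hpb.symm) hx hpx

lemma IsCFColoring.exists_extend_of_pairwiseDisjoint {k : ℕ} {D : Set V}
    (hD : D.PairwiseDisjoint (closedNbhd G)) {c : ↥(⋃ d ∈ D, closedNbhd G d)ᶜ → Option (Fin k)}
    (hc : IsCFColoring (G.induce (⋃ d ∈ D, closedNbhd G d)ᶜ) k c) :
    ∃ c' : V → Option (Fin (k + 1)), IsCFColoring G (k + 1) c' := by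
  classical
  have hDX {d : V} (hd : d ∈ D) : d ∈ ⋃ d ∈ D, closedNbhd G d :=
    Set.mem_biUnion hd (self_mem_closedNbhd d)
  refine ⟨fun v => if v ∈ D then some (Fin.last k)
    else if h : v ∈ (⋃ d ∈ D, closedNbhd G d)ᶜ then (c ⟨v, h⟩).map Fin.castSucc else none,
    fun v => ?_⟩
  by_cases hv : v ∈ ⋃ d ∈ D, closedNbhd G d
  · obtain ⟨d, hd, hvd⟩ := Set.mem_iUnion₂.1 hv
    refine ⟨d, mem_closedNbhd_comm.1 hvd, Fin.last k, by simp [hd], fun u hu hcu => ?_⟩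
    by_cases huD : u ∈ D
    · by_contra hud
      exact Set.disjoint_left.1 (hD huD hd hud) (mem_closedNbhd_comm.1 hu) hvd
    · simp [huD] at hcu
  · obtain ⟨w, hw, col, hwcol, huniq⟩ := hc ⟨v, hv⟩
    have hwD : (w : V) ∉ D := fun h => w.2 (hDX h)
    refine ⟨w, mem_closedNbhd_induce.1 hw, col.castSucc,
      by simp only [if_neg hwD, dif_pos w.2, hwcol, Option.map_some], fun u hu hcu => ?_⟩
    by_cases huD : u ∈ D
    · simp only [huD, if_true, Option.some_inj] at hcu
      exact absurd hcu (Fin.castSucc_lt_last col).ne'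
    by_cases huX : u ∈ (⋃ d ∈ D, closedNbhd G d)ᶜ
    · simp only [huD, huX, if_false, dif_pos, Option.map_eq_some_iff, Fin.castSucc_inj] at hcu
      obtain ⟨_, hcu, rfl⟩ := hcu
      exact congrArg Subtype.val (huniq ⟨u, huX⟩ (mem_closedNbhd_induce.2 hu) hcu)
    · simp only [if_neg huD, dif_neg huX, reduceCtorEq] at hcu

lemma SimpleGraph.Connected.exists_isCFColoring_succ [Finite V] {k : ℕ} (hG : G.Connected)
    (h1 : ¬ HasMinor G (⊤ : SimpleGraph (Fin (k + 3))))
    (h2 : ¬ HasMinor G (completeMinusTriangle (k + 4)))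
    (ih : ∀ U : Set V, ¬ HasMinor (G.induce U) (⊤ : SimpleGraph (Fin (k + 2))) →
      ¬ HasMinor (G.induce U) (completeMinusTriangle (k + 3)) →
      ∃ c : U → Option (Fin k), IsCFColoring (G.induce U) k c) :
    ∃ c : V → Option (Fin (k + 1)), IsCFColoring G (k + 1) c := by
  obtain ⟨D, hD, hX, hdom⟩ := hG.exists_dominating_packing
  obtain ⟨c, hc⟩ := ih _ (fun h => h1 (h.extend_apex le_top hX disjoint_compl_left hdom))
    (fun h => h2 (h.extend_apex (completeMinusTriangle_comap_castSucc _).le hX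
      disjoint_compl_left hdom))
  exact hc.exists_extend_of_pairwiseDisjoint hD

end

/-- for `k ≥ 1`, a graph with neither a `K_{k+2}` minor nor a
`K_{k+3}^{-3}` minor admits a closed-neighborhood conflict-free `k`-coloring. -/
theorem cf_colorable_of_excluded_minors {V : Type*} [Fintype V] (G : SimpleGraph V)
    (k : ℕ) (hk : 1 ≤ k)
    (h1 : ¬ HasMinor G (⊤ : SimpleGraph (Fin (k + 2))))
    (h2 : ¬ HasMinor G (completeMinusTriangle (k + 3))) :
    ∃ c : V → Option (Fin k), IsCFColoring G k c := by
  induction k, hk using Nat.le_induction generalizing V with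
  | base => exact (exists_isPerfectCode h1 h2).elim fun D hD => hD.exists_isCFColoring
  | succ k _ ih =>
    refine exists_isCFColoring_of_forall_connectedComponent fun C => ?_
    refine C.connected_toSimpleGraph.exists_isCFColoring_succ
      (fun h => h1 (h.map (Copy.induce G _))) (fun h => h2 (h.map (Copy.induce G _)))
      fun U hU1 hU2 => ?_
    have := Fintype.ofFinite U
    exact ih _ hU1 hU2
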